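/- Let 𝒢 be an ultragraph such that r(e) is finite for each edge e, let R be a unital commutative ring, and let E_𝒢 be the directed graph associated to 𝒢. Then there exists an R-algebra isomorphism π : L_R(𝒢) → L_R(E_𝒢) satisfying π(p_A) = Σ_{v∈A} p_v for each A ∈ 𝒢⁰, π(s_e) = Σ_{u∈r(e)} s_{e_u} and π(s_e*) = Σ_{u∈r(e)} s_{e_u}* for each e ∈ 𝒢¹, and π is ℤ-graded: π(L_R(𝒢)_m) = L_R(E_𝒢)_m for every m ∈ ℤ. -/

import Mathlib

/-!
Every generalized vertex of a finite-range ultragraph is a finite set `A`, and the relations force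
`p_A = ∑_{v ∈ A} p_v`. So `s_e ↦ ∑_{u ∈ r(e)} s_{e_u}`, `s_e^* ↦ ∑_{u ∈ r(e)} s_{e_u}^*`,
`p_A ↦ ∑_{v ∈ A} p_v` is a Leavitt `𝒢`-family in `L_R(E_𝒢)` (the edges `e_u`, `u ∈ r(e)`, have
pairwise disjoint ranges), while `s_{e_u} ↦ s_e p_u`, `s_{e_u}^* ↦ p_u s_e^*`, `p_A ↦ ∑_{v ∈ A} p_v`
is a Leavitt `E_𝒢`-family in `L_R(𝒢)`; the two induced homomorphisms are mutually inverse on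
generators. Both send generators to homogeneous elements of the same degree, and multiplying a
monomial `s_α p_A s_β^*` by `s_e` on the left (by `s_e^*` on the right) gives zero or a monomial of
degree one higher (lower), so both maps preserve the `ℤ`-grading.
-/

/-- An ultragraph: a source map `src : E → V` and a range map assigning to each
edge a nonempty set of vertices. -/
structure Ultragraph (V : Type) (E : Type) : Type where
  src : E → V
  rng : E → Set V
  rng_nonempty : ∀ e, (rng e).Nonempty

namespace Ultragraph

variable {V E : Type}

/-- A finite path: a (possibly empty) list of edges with compatible transitions. -/
def IsPath (G : Ultragraph V E) (es : List E) : Prop :=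
  es.Chain' fun e f => G.src f ∈ G.rng e

/-- An infinite path. -/
def IsInfinitePath (G : Ultragraph V E) (p : ℕ → E) : Prop :=
  ∀ i : ℕ, G.src (p (i + 1)) ∈ G.rng (p i)

/-- Condition (Y). -/
def ConditionY (G : Ultragraph V E) : Prop :=
  ∀ p : ℕ → E, G.IsInfinitePath p →
    ∃ (k : ℕ) (α : List E) (hα : α ≠ []),
      α.length = k + 1 ∧ G.IsPath α ∧ G.src (p k) ∈ G.rng (α.getLast hα)

/-- The collection 𝒢⁰ of generalized vertices: the smallest collection of subsets of `V`
containing the singletons and the ranges of edges, closed under finite unions and finite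
intersections (the empty set is included for convenience; `p_∅ = 0`). -/
inductive InG0 (G : Ultragraph V E) : Set V → Prop
  | vertex (v : V) : InG0 G {v}
  | range (e : E) : InG0 G (G.rng e)
  | union {A B : Set V} : InG0 G A → InG0 G B → InG0 G (A ∪ B)
  | inter {A B : Set V} : InG0 G A → InG0 G B → InG0 G (A ∩ B)

/-- Generators of the Leavitt path algebra. -/
inductive LPAGen (G : Ultragraph V E) : Type
  | edge : E → LPAGen G
  | star : E → LPAGen G
  | proj : (A : Set V) → G.InG0 A → LPAGen G

/-- The directed graph `E_𝒢` associated to an ultragraph, viewed again as an ultragraph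
whose edge ranges are singletons. -/
def toGraph (G : Ultragraph V E) : Ultragraph V {q : E × V // q.2 ∈ G.rng q.1} where
  src q := G.src q.1.1
  rng q := {q.1.2}
  rng_nonempty q := ⟨q.1.2, rfl⟩

variable (R : Type) [CommRing R] (G : Ultragraph V E)

/-- The free `R`-algebra on the generators. -/
abbrev FA := FreeAlgebra R (LPAGen G)

/-- The generator `g` inside the free algebra. -/
def X (g : LPAGen G) : FA R G := FreeAlgebra.ι R g

/-- The defining relations of the Leavitt path algebra of an ultragraph. -/
inductive LeavittRel : FA R G → FA R G → Prop
  | proj_empty (h : G.InG0 ∅) : LeavittRel (X R G (.proj ∅ h)) 0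
  | proj_mul (A B : Set V) (hA : G.InG0 A) (hB : G.InG0 B) :
      LeavittRel (X R G (.proj A hA) * X R G (.proj B hB))
        (X R G (.proj (A ∩ B) (hA.inter hB)))
  | proj_union (A B : Set V) (hA : G.InG0 A) (hB : G.InG0 B) :
      LeavittRel (X R G (.proj (A ∪ B) (hA.union hB)))
        (X R G (.proj A hA) + X R G (.proj B hB) - X R G (.proj (A ∩ B) (hA.inter hB)))
  | src_mul (e : E) :
      LeavittRel (X R G (.proj {G.src e} (InG0.vertex (G.src e))) * X R G (.edge e))
        (X R G (.edge e))
  | mul_rng (e : E) :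
      LeavittRel (X R G (.edge e) * X R G (.proj (G.rng e) (InG0.range e)))
        (X R G (.edge e))
  | rng_mul_star (e : E) :
      LeavittRel (X R G (.proj (G.rng e) (InG0.range e)) * X R G (.star e))
        (X R G (.star e))
  | star_mul_src (e : E) :
      LeavittRel (X R G (.star e) * X R G (.proj {G.src e} (InG0.vertex (G.src e))))
        (X R G (.star e))
  | star_mul_same (e : E) :
      LeavittRel (X R G (.star e) * X R G (.edge e))
        (X R G (.proj (G.rng e) (InG0.range e)))
  | star_mul_ne (e f : E) (h : e ≠ f) :
      LeavittRel (X R G (.star e) * X R G (.edge f)) 0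
  | ck (v : V) (hfin : {e : E | G.src e = v}.Finite) (hne : {e : E | G.src e = v}.Nonempty) :
      LeavittRel (X R G (.proj {v} (InG0.vertex v)))
        (∑ e ∈ hfin.toFinset, X R G (.edge e) * X R G (.star e))

/-- The (unital) quotient of the free algebra by the Leavitt relations; the Leavitt
path algebra `L_R(𝒢)` sits inside it as the non-unital subalgebra generated by the
generators. -/
abbrev LPABig := RingQuot (LeavittRel R G)

/-- The image of a generator in the quotient. -/
def gen (g : LPAGen G) : LPABig R G := RingQuot.mkAlgHom R (LeavittRel R G) (X R G g)

/-- `s_e`. -/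
def sgen (e : E) : LPABig R G := gen R G (.edge e)

/-- `s_e^*`. -/
def tgen (e : E) : LPABig R G := gen R G (.star e)

/-- `p_A`. -/
def pgen (A : Set V) (hA : G.InG0 A) : LPABig R G := gen R G (.proj A hA)

/-- `s_α` for a finite path `α` (the empty product is `1` in the ambient algebra). -/
def sPath (es : List E) : LPABig R G := (es.map (sgen R G)).prod

/-- `s_β^*` for a finite path `β`. -/
def tPath (es : List E) : LPABig R G := (es.reverse.map (tgen R G)).prod

/-- The monomial `s_α p_A s_β^*`. -/
def mono (α : List E) (A : Set V) (hA : G.InG0 A) (β : List E) : LPABig R G :=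
  sPath R G α * pgen R G A hA * tPath R G β

/-- The `m`-th component of the canonical `ℤ`-grading: all finite `R`-linear combinations
of monomials `s_α p_A s_β^*` with `|α| - |β| = m`. -/
def zComp (m : ℤ) : AddSubgroup (LPABig R G) :=
  AddSubgroup.closure {x | ∃ (l : R) (α β : List E) (A : Set V) (hA : G.InG0 A),
    G.IsPath α ∧ G.IsPath β ∧ (α.length : ℤ) - (β.length : ℤ) = m ∧
    x = l • mono R G α A hA β}

/-- The element of the free group on the edges determined by a finite path. -/
def pathWord (es : List E) : FreeGroup E := (es.map FreeGroup.of).prod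

/-- The `g`-th component of the free-group grading: all finite `R`-linear combinations
of monomials `s_α p_A s_β^*` with `α β⁻¹ = g` in the free group on the edges. -/
def fComp (g : FreeGroup E) : AddSubgroup (LPABig R G) :=
  AddSubgroup.closure {x | ∃ (l : R) (α β : List E) (A : Set V) (hA : G.InG0 A),
    G.IsPath α ∧ G.IsPath β ∧ pathWord α * (pathWord β)⁻¹ = g ∧
    x = l • mono R G α A hA β}

/-- The set of generators inside the quotient. -/
def genSet : Set (LPABig R G) := Set.range (gen R G)

/-- The Leavitt path algebra `L_R(𝒢)`: the non-unital subalgebra of the quotient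
generated by the images of the generators. -/
def LPA : NonUnitalSubalgebra R (LPABig R G) := NonUnitalAlgebra.adjoin R (genSet R G)

/-- `s_e` as an element of `L_R(𝒢)`. -/
def sEl (e : E) : LPA R G :=
  ⟨sgen R G e, NonUnitalAlgebra.subset_adjoin R ⟨LPAGen.edge e, rfl⟩⟩

/-- `s_e^*` as an element of `L_R(𝒢)`. -/
def tEl (e : E) : LPA R G :=
  ⟨tgen R G e, NonUnitalAlgebra.subset_adjoin R ⟨LPAGen.star e, rfl⟩⟩

/-- `p_A` as an element of `L_R(𝒢)`. -/
def pEl (A : Set V) (hA : G.InG0 A) : LPA R G :=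
  ⟨pgen R G A hA, NonUnitalAlgebra.subset_adjoin R ⟨LPAGen.proj A hA, rfl⟩⟩

end Ultragraph

/-- The additive span of the set of products `{a b : a ∈ S, b ∈ T}`. -/
def mulSpan {A : Type} [AddGroup A] [Mul A] (S T : AddSubgroup A) : AddSubgroup A :=
  AddSubgroup.closure {x | ∃ a ∈ S, ∃ b ∈ T, x = a * b}

namespace Ultragraph

variable {V E : Type}

section Relations

variable {R : Type} [CommRing R] {G : Ultragraph V E}

theorem pgen_congr {A B : Set V} (hA : G.InG0 A) (hB : G.InG0 B) (h : A = B) :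
    pgen R G A hA = pgen R G B hB := by
  subst h; rfl

theorem pgen_empty (h : G.InG0 ∅) : pgen R G ∅ h = 0 := by
  simpa [pgen, gen] using RingQuot.mkAlgHom_rel R (LeavittRel.proj_empty h)

theorem pgen_mul_pgen {A B : Set V} (hA : G.InG0 A) (hB : G.InG0 B) :
    pgen R G A hA * pgen R G B hB = pgen R G (A ∩ B) (hA.inter hB) := by
  simpa [pgen, gen] using RingQuot.mkAlgHom_rel R (LeavittRel.proj_mul A B hA hB)

theorem pgen_union {A B : Set V} (hA : G.InG0 A) (hB : G.InG0 B) :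
    pgen R G (A ∪ B) (hA.union hB) =
      pgen R G A hA + pgen R G B hB - pgen R G (A ∩ B) (hA.inter hB) := by
  simpa [pgen, gen] using RingQuot.mkAlgHom_rel R (LeavittRel.proj_union A B hA hB)

theorem pgen_src_mul_sgen (e : E) :
    pgen R G {G.src e} (.vertex _) * sgen R G e = sgen R G e := by
  simpa [pgen, sgen, gen] using RingQuot.mkAlgHom_rel R (LeavittRel.src_mul (G := G) e)

theorem sgen_mul_pgen_rng (e : E) :
    sgen R G e * pgen R G (G.rng e) (.range e) = sgen R G e := by
  simpa [pgen, sgen, gen] using RingQuot.mkAlgHom_rel R (LeavittRel.mul_rng (G := G) e)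

theorem pgen_rng_mul_tgen (e : E) :
    pgen R G (G.rng e) (.range e) * tgen R G e = tgen R G e := by
  simpa [pgen, tgen, gen] using RingQuot.mkAlgHom_rel R (LeavittRel.rng_mul_star (G := G) e)

theorem tgen_mul_pgen_src (e : E) :
    tgen R G e * pgen R G {G.src e} (.vertex _) = tgen R G e := by
  simpa [pgen, tgen, gen] using RingQuot.mkAlgHom_rel R (LeavittRel.star_mul_src (G := G) e)

theorem tgen_mul_sgen_self (e : E) :
    tgen R G e * sgen R G e = pgen R G (G.rng e) (.range e) := by
  simpa [pgen, sgen, tgen, gen] using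
    RingQuot.mkAlgHom_rel R (LeavittRel.star_mul_same (G := G) e)

theorem tgen_mul_sgen_of_ne {e f : E} (h : e ≠ f) : tgen R G e * sgen R G f = 0 := by
  simpa [sgen, tgen, gen] using RingQuot.mkAlgHom_rel R (LeavittRel.star_mul_ne (G := G) e f h)

theorem pgen_vertex_eq_sum (v : V) (hf : {e : E | G.src e = v}.Finite)
    (hne : {e : E | G.src e = v}.Nonempty) :
    pgen R G {v} (.vertex v) = ∑ e ∈ hf.toFinset, sgen R G e * tgen R G e := by
  simpa [pgen, sgen, tgen, gen] using RingQuot.mkAlgHom_rel R (LeavittRel.ck v hf hne)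

end Relations

section Consequences

variable {R : Type} [CommRing R] {G : Ultragraph V E}

theorem pgen_of_eq_empty {A : Set V} (hA : G.InG0 A) (h : A = ∅) : pgen R G A hA = 0 :=
  (pgen_congr hA (h ▸ hA) h).trans (pgen_empty _)

theorem pgen_mul_pgen_of_subset {A B : Set V} (hA : G.InG0 A) (hB : G.InG0 B) (h : A ⊆ B) :
    pgen R G A hA * pgen R G B hB = pgen R G A hA := by
  rw [pgen_mul_pgen, pgen_congr _ hA (Set.inter_eq_left.mpr h)]

theorem pgen_mul_pgen_of_superset {A B : Set V} (hA : G.InG0 A) (hB : G.InG0 B) (h : B ⊆ A) :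
    pgen R G A hA * pgen R G B hB = pgen R G B hB := by
  rw [pgen_mul_pgen, pgen_congr _ hB (Set.inter_eq_right.mpr h)]

theorem pgen_mul_pgen_of_disjoint {A B : Set V} (hA : G.InG0 A) (hB : G.InG0 B)
    (h : Disjoint A B) : pgen R G A hA * pgen R G B hB = 0 := by
  rw [pgen_mul_pgen, pgen_of_eq_empty _ h.inter_eq]

theorem pgen_mul_sgen_of_mem {A : Set V} (hA : G.InG0 A) {e : E} (h : G.src e ∈ A) :
    pgen R G A hA * sgen R G e = sgen R G e := by
  rw [← pgen_src_mul_sgen, ← mul_assoc,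
    pgen_mul_pgen_of_superset _ _ (Set.singleton_subset_iff.mpr h)]

theorem pgen_mul_sgen_of_notMem {A : Set V} (hA : G.InG0 A) {e : E} (h : G.src e ∉ A) :
    pgen R G A hA * sgen R G e = 0 := by
  rw [← pgen_src_mul_sgen, ← mul_assoc,
    pgen_mul_pgen_of_disjoint _ _ (Set.disjoint_singleton_right.mpr h), zero_mul]

theorem tgen_mul_pgen_of_mem {A : Set V} (hA : G.InG0 A) {e : E} (h : G.src e ∈ A) :
    tgen R G e * pgen R G A hA = tgen R G e := by
  rw [← tgen_mul_pgen_src, mul_assoc,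
    pgen_mul_pgen_of_subset _ _ (Set.singleton_subset_iff.mpr h)]

theorem tgen_mul_pgen_of_notMem {A : Set V} (hA : G.InG0 A) {e : E} (h : G.src e ∉ A) :
    tgen R G e * pgen R G A hA = 0 := by
  rw [← tgen_mul_pgen_src, mul_assoc,
    pgen_mul_pgen_of_disjoint _ _ (Set.disjoint_singleton_left.mpr h), mul_zero]

theorem sgen_mul_pgen (e : E) {A : Set V} (hA : G.InG0 A) :
    sgen R G e * pgen R G A hA =
      sgen R G e * pgen R G (G.rng e ∩ A) ((InG0.range e).inter hA) := by
  conv_lhs => rw [← sgen_mul_pgen_rng, mul_assoc, pgen_mul_pgen]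

theorem pgen_mul_tgen {A : Set V} (hA : G.InG0 A) (e : E) :
    pgen R G A hA * tgen R G e = pgen R G (A ∩ G.rng e) (hA.inter (.range e)) * tgen R G e := by
  conv_lhs => rw [← pgen_rng_mul_tgen, ← mul_assoc, pgen_mul_pgen]

theorem sgen_mul_pgen_of_subset {e : E} {A : Set V} (hA : G.InG0 A) (h : G.rng e ⊆ A) :
    sgen R G e * pgen R G A hA = sgen R G e := by
  rw [← sgen_mul_pgen_rng, mul_assoc, pgen_mul_pgen_of_subset _ _ h]

theorem sgen_mul_pgen_of_disjoint {e : E} {A : Set V} (hA : G.InG0 A) (h : Disjoint (G.rng e) A) :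
    sgen R G e * pgen R G A hA = 0 := by
  rw [← sgen_mul_pgen_rng, mul_assoc, pgen_mul_pgen_of_disjoint _ _ h, mul_zero]

theorem pgen_mul_tgen_of_subset {e : E} {A : Set V} (hA : G.InG0 A) (h : G.rng e ⊆ A) :
    pgen R G A hA * tgen R G e = tgen R G e := by
  rw [← pgen_rng_mul_tgen, ← mul_assoc, pgen_mul_pgen_of_superset _ _ h]

theorem pgen_mul_tgen_of_disjoint {e : E} {A : Set V} (hA : G.InG0 A) (h : Disjoint A (G.rng e)) :
    pgen R G A hA * tgen R G e = 0 := by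
  rw [← pgen_rng_mul_tgen, ← mul_assoc, pgen_mul_pgen_of_disjoint _ _ h, zero_mul]

theorem sgen_mul_sgen_of_notMem {e f : E} (h : G.src f ∉ G.rng e) :
    sgen R G e * sgen R G f = 0 := by
  rw [← sgen_mul_pgen_rng, mul_assoc, pgen_mul_sgen_of_notMem _ h, mul_zero]

theorem tgen_mul_tgen_of_notMem {e f : E} (h : G.src e ∉ G.rng f) :
    tgen R G e * tgen R G f = 0 := by
  rw [← pgen_rng_mul_tgen f, ← mul_assoc, tgen_mul_pgen_of_notMem _ h, zero_mul]

theorem sgen_mul_tgen_of_disjoint {e f : E} (h : Disjoint (G.rng e) (G.rng f)) :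
    sgen R G e * tgen R G f = 0 := by
  rw [← sgen_mul_pgen_rng, mul_assoc, pgen_mul_tgen_of_disjoint _ h, mul_zero]

end Consequences

section VertexSums

variable (R : Type) [CommRing R] (G : Ultragraph V E)

noncomputable def vertexSum (s : Finset V) : LPABig R G :=
  ∑ v ∈ s, pgen R G {v} (.vertex v)

variable {R G}

@[simp]
theorem vertexSum_empty : vertexSum R G ∅ = 0 := Finset.sum_empty

@[simp]
theorem vertexSum_singleton (v : V) : vertexSum R G {v} = pgen R G {v} (.vertex v) :=
  Finset.sum_singleton _ _

theorem pgen_vertex_mul_pgen_vertex [DecidableEq V] (v w : V) :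
    pgen R G {v} (.vertex v) * pgen R G {w} (.vertex w) =
      if v = w then pgen R G {w} (.vertex w) else 0 := by
  split_ifs with h
  · subst h; exact pgen_mul_pgen_of_subset _ _ le_rfl
  · exact pgen_mul_pgen_of_disjoint _ _ (Set.disjoint_singleton.mpr h)

theorem vertexSum_mul_vertexSum [DecidableEq V] (s t : Finset V) :
    vertexSum R G s * vertexSum R G t = vertexSum R G (s ∩ t) := by
  simp only [vertexSum, Finset.sum_mul_sum, pgen_vertex_mul_pgen_vertex, Finset.sum_ite_eq,
    Finset.sum_ite_mem]

theorem vertexSum_union [DecidableEq V] (s t : Finset V) :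
    vertexSum R G (s ∪ t) = vertexSum R G s + vertexSum R G t - vertexSum R G (s ∩ t) :=
  eq_sub_of_add_eq (Finset.sum_union_inter)

theorem inG0_of_nonempty {s : Finset V} (hs : s.Nonempty) : G.InG0 ↑s := by
  induction hs using Finset.Nonempty.cons_induction with
  | singleton v => simpa using InG0.vertex v
  | cons v s _ _ ih =>
    rw [Finset.coe_cons, Set.insert_eq]
    exact (InG0.vertex v).union ih

theorem inG0_of_finite_nonempty {A : Set V} (hf : A.Finite) (hne : A.Nonempty) : G.InG0 A := by
  simpa using inG0_of_nonempty (G := G) (hf.toFinset_nonempty.mpr hne)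

theorem pgen_eq_vertexSum {s : Finset V} (hs : G.InG0 ↑s) :
    pgen R G ↑s hs = vertexSum R G s := by
  classical
  induction s using Finset.induction_on with
  | empty => exact pgen_of_eq_empty hs Finset.coe_empty
  | insert v s hv ih =>
    rcases s.eq_empty_or_nonempty with rfl | hne
    · simp
    · have hs' := inG0_of_nonempty (G := G) hne
      have hdisj : Disjoint {v} (s : Set V) := Set.disjoint_singleton_left.mpr hv
      rw [pgen_congr hs ((InG0.vertex v).union hs') (by rw [Finset.coe_insert, Set.insert_eq]),
        pgen_union (.vertex v) hs', pgen_of_eq_empty ((InG0.vertex v).inter hs') hdisj.inter_eq,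
        sub_zero, ih hs', vertexSum, vertexSum, Finset.sum_insert hv]

end VertexSums

structure IsLeavittFamily (G : Ultragraph V E) {B : Type*} [Ring B] (s t : E → B)
    (p : ∀ A, G.InG0 A → B) : Prop where
  p_empty : ∀ h : G.InG0 ∅, p ∅ h = 0
  p_mul_p : ∀ {A B} (hA : G.InG0 A) (hB : G.InG0 B), p A hA * p B hB = p (A ∩ B) (hA.inter hB)
  p_union : ∀ {A B} (hA : G.InG0 A) (hB : G.InG0 B),
    p (A ∪ B) (hA.union hB) = p A hA + p B hB - p (A ∩ B) (hA.inter hB)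
  p_src_mul_s : ∀ e, p {G.src e} (.vertex _) * s e = s e
  s_mul_p_rng : ∀ e, s e * p (G.rng e) (.range e) = s e
  p_rng_mul_t : ∀ e, p (G.rng e) (.range e) * t e = t e
  t_mul_p_src : ∀ e, t e * p {G.src e} (.vertex _) = t e
  t_mul_s_self : ∀ e, t e * s e = p (G.rng e) (.range e)
  t_mul_s_of_ne : ∀ {e f}, e ≠ f → t e * s f = 0
  p_vertex_eq_sum : ∀ v (hf : {e : E | G.src e = v}.Finite), {e : E | G.src e = v}.Nonempty →
    p {v} (.vertex v) = ∑ e ∈ hf.toFinset, s e * t e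

def LPAGen.eval {G : Ultragraph V E} {B : Type*} (s t : E → B) (p : ∀ A, G.InG0 A → B) :
    LPAGen G → B
  | .edge e => s e
  | .star e => t e
  | .proj A hA => p A hA

namespace IsLeavittFamily

variable (R : Type) [CommRing R] {G : Ultragraph V E} {B : Type*} [Ring B] [Algebra R B]
  {s t : E → B} {p : ∀ A, G.InG0 A → B}

theorem lift_rel (h : G.IsLeavittFamily s t p) {a b : FA R G} (hab : LeavittRel R G a b) :
    FreeAlgebra.lift R (LPAGen.eval s t p) a = FreeAlgebra.lift R (LPAGen.eval s t p) b := by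
  cases hab <;>
    simp only [X, map_mul, map_add, map_sub, map_zero, map_sum, FreeAlgebra.lift_ι_apply,
      LPAGen.eval]
  exacts [h.p_empty _, h.p_mul_p _ _, h.p_union _ _, h.p_src_mul_s _, h.s_mul_p_rng _,
    h.p_rng_mul_t _, h.t_mul_p_src _, h.t_mul_s_self _, h.t_mul_s_of_ne ‹_›,
    h.p_vertex_eq_sum _ _ ‹_›]

noncomputable def lift (h : G.IsLeavittFamily s t p) : LPABig R G →ₐ[R] B :=
  RingQuot.liftAlgHom R ⟨FreeAlgebra.lift R (LPAGen.eval s t p), fun _ _ => h.lift_rel R⟩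

variable {R}

theorem lift_gen (h : G.IsLeavittFamily s t p) (g : LPAGen G) :
    h.lift R (gen R G g) = LPAGen.eval s t p g := by
  rw [lift, gen, RingQuot.liftAlgHom_mkAlgHom_apply, X, FreeAlgebra.lift_ι_apply]

theorem lift_sgen (h : G.IsLeavittFamily s t p) (e : E) : h.lift R (sgen R G e) = s e :=
  h.lift_gen (.edge e)

theorem lift_tgen (h : G.IsLeavittFamily s t p) (e : E) : h.lift R (tgen R G e) = t e :=
  h.lift_gen (.star e)

theorem lift_pgen (h : G.IsLeavittFamily s t p) {A : Set V} (hA : G.InG0 A) :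
    h.lift R (pgen R G A hA) = p A hA :=
  h.lift_gen (.proj A hA)

end IsLeavittFamily

section Universal

variable {R : Type} [CommRing R] {G : Ultragraph V E} {B : Type*} [Semiring B] [Algebra R B]

theorem algHom_ext {f g : LPABig R G →ₐ[R] B}
    (hs : ∀ e, f (sgen R G e) = g (sgen R G e)) (ht : ∀ e, f (tgen R G e) = g (tgen R G e))
    (hp : ∀ A hA, f (pgen R G A hA) = g (pgen R G A hA)) : f = g := by
  refine RingQuot.ringQuot_ext' R _ _ (FreeAlgebra.hom_ext (funext fun x => ?_))
  cases x with
  | edge e => exact hs e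
  | star e => exact ht e
  | proj A hA => exact hp A hA

theorem map_mem_LPA {S : NonUnitalSubalgebra R B} (f : LPABig R G →ₐ[R] B)
    (hs : ∀ e, f (sgen R G e) ∈ S) (ht : ∀ e, f (tgen R G e) ∈ S)
    (hp : ∀ A hA, f (pgen R G A hA) ∈ S) {x : LPABig R G} (hx : x ∈ LPA R G) : f x ∈ S := by
  refine NonUnitalAlgebra.adjoin_le (S := S.comap f) ?_ hx
  rintro _ ⟨g, rfl⟩
  cases g with
  | edge e => exact hs e
  | star e => exact ht e
  | proj A hA => exact hp A hA

end Universal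

section FiniteVertexSums

variable {R : Type} [CommRing R] {G : Ultragraph V E}

@[simp]
theorem vertexSum_toFinset_singleton (v : V) (h : ({v} : Set V).Finite) :
    vertexSum R G h.toFinset = pgen R G {v} (.vertex v) := by
  simp

theorem vertexSum_toFinset_mul {A B : Set V} (hA : A.Finite) (hB : B.Finite) :
    vertexSum R G hA.toFinset * vertexSum R G hB.toFinset =
      vertexSum R G (hA.inter_of_left B).toFinset := by
  classical
  rw [vertexSum_mul_vertexSum, Set.Finite.toFinset_inter]

theorem vertexSum_toFinset_union {A B : Set V} (hA : A.Finite) (hB : B.Finite) :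
    vertexSum R G (hA.union hB).toFinset = vertexSum R G hA.toFinset + vertexSum R G hB.toFinset -
      vertexSum R G (hA.inter_of_left B).toFinset := by
  classical
  rw [Set.Finite.toFinset_union, vertexSum_union, Set.Finite.toFinset_inter]

theorem vertexSum_toFinset_eq_pgen {A : Set V} (hA : G.InG0 A) (hf : A.Finite) :
    vertexSum R G hf.toFinset = pgen R G A hA := by
  rw [← pgen_eq_vertexSum (by rwa [hf.coe_toFinset])]
  exact pgen_congr _ _ hf.coe_toFinset

theorem InG0.finite (hfin : ∀ e, (G.rng e).Finite) {A : Set V} (hA : G.InG0 A) : A.Finite := by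
  induction hA with
  | vertex v => exact Set.finite_singleton v
  | range e => exact hfin e
  | union _ _ hA hB => exact hA.union hB
  | inter _ _ hA _ => exact hA.inter_of_left _

end FiniteVertexSums

section ToGraphSources

variable (G : Ultragraph V E)

theorem toGraph_rng_finite (q : {q : E × V // q.2 ∈ G.rng q.1}) : (G.toGraph.rng q).Finite :=
  Set.finite_singleton _

variable {G}

theorem finite_toGraph_src {v : V} (hfin : ∀ e, (G.rng e).Finite)
    (hS : {e : E | G.src e = v}.Finite) : {q | G.toGraph.src q = v}.Finite := by
  refine ((hS.biUnion fun e _ => (hfin e).image fun u => (e, u)).preimage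
    Subtype.val_injective.injOn).subset ?_
  rintro ⟨⟨e, u⟩, hu⟩ (he : G.src e = v)
  exact Set.mem_biUnion he ⟨u, hu, rfl⟩

theorem finite_src_of_toGraph {v : V} (hQ : {q | G.toGraph.src q = v}.Finite) :
    {e : E | G.src e = v}.Finite := by
  refine (hQ.image fun q => q.1.1).subset fun e (he : G.src e = v) => ?_
  obtain ⟨u, hu⟩ := G.rng_nonempty e
  exact ⟨⟨(e, u), hu⟩, he, rfl⟩

theorem nonempty_toGraph_src {v : V} (hS : {e : E | G.src e = v}.Nonempty) :
    {q | G.toGraph.src q = v}.Nonempty := by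
  obtain ⟨e, he⟩ := hS
  obtain ⟨u, hu⟩ := G.rng_nonempty e
  exact ⟨⟨(e, u), hu⟩, he⟩

theorem nonempty_src_of_toGraph {v : V} (hQ : {q | G.toGraph.src q = v}.Nonempty) :
    {e : E | G.src e = v}.Nonempty :=
  let ⟨q, hq⟩ := hQ; ⟨q.1.1, hq⟩

theorem sum_toGraph_src {M : Type*} [AddCommMonoid M] (hfin : ∀ e, (G.rng e).Finite) {v : V}
    (hS : {e : E | G.src e = v}.Finite) (hQ : {q | G.toGraph.src q = v}.Finite)
    (F : {q : E × V // q.2 ∈ G.rng q.1} → M) :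
    ∑ q ∈ hQ.toFinset, F q = ∑ e ∈ hS.toFinset, ∑ u ∈ (hfin e).toFinset.attach,
      F ⟨(e, u.1), (Set.Finite.mem_toFinset _).mp u.2⟩ := by
  rw [Finset.sum_sigma']
  refine Finset.sum_nbij' (fun q => ⟨q.1.1, q.1.2, (hfin _).mem_toFinset.mpr q.2⟩)
    (fun x => ⟨(x.1, x.2.1), (Set.Finite.mem_toFinset _).mp x.2.2⟩) ?_ ?_ ?_ ?_ ?_
  · intro q hq
    exact Finset.mem_sigma.mpr
      ⟨hS.mem_toFinset.mpr (hQ.mem_toFinset.mp hq), Finset.mem_attach _ _⟩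
  · intro x hx
    exact hQ.mem_toFinset.mpr (hS.mem_toFinset.mp (Finset.mem_sigma.mp hx).1)
  all_goals intros; rfl

end ToGraphSources

section ToGraphFamily

variable (R : Type) [CommRing R] (G : Ultragraph V E) (hfin : ∀ e, (G.rng e).Finite)

noncomputable def sgenSum (e : E) : LPABig R G.toGraph :=
  ∑ u ∈ (hfin e).toFinset.attach,
    sgen R G.toGraph ⟨(e, u.1), (Set.Finite.mem_toFinset _).mp u.2⟩

noncomputable def tgenSum (e : E) : LPABig R G.toGraph :=
  ∑ u ∈ (hfin e).toFinset.attach,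
    tgen R G.toGraph ⟨(e, u.1), (Set.Finite.mem_toFinset _).mp u.2⟩

variable {R G}

theorem pgen_src_mul_sgenSum (e : E) :
    pgen R G.toGraph {G.src e} (.vertex _) * sgenSum R G hfin e = sgenSum R G hfin e := by
  rw [sgenSum, Finset.mul_sum]
  exact Finset.sum_congr rfl fun u _ => pgen_mul_sgen_of_mem _ rfl

theorem tgenSum_mul_pgen_src (e : E) :
    tgenSum R G hfin e * pgen R G.toGraph {G.src e} (.vertex _) = tgenSum R G hfin e := by
  rw [tgenSum, Finset.sum_mul]
  exact Finset.sum_congr rfl fun u _ => tgen_mul_pgen_of_mem _ rfl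

theorem sgenSum_mul_pgen_rng (e : E) (hA : G.toGraph.InG0 (G.rng e)) :
    sgenSum R G hfin e * pgen R G.toGraph (G.rng e) hA = sgenSum R G hfin e := by
  rw [sgenSum, Finset.sum_mul]
  refine Finset.sum_congr rfl fun u _ => sgen_mul_pgen_of_subset _ ?_
  exact Set.singleton_subset_iff.mpr ((Set.Finite.mem_toFinset _).mp u.2)

theorem pgen_rng_mul_tgenSum (e : E) (hA : G.toGraph.InG0 (G.rng e)) :
    pgen R G.toGraph (G.rng e) hA * tgenSum R G hfin e = tgenSum R G hfin e := by
  rw [tgenSum, Finset.mul_sum]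
  refine Finset.sum_congr rfl fun u _ => pgen_mul_tgen_of_subset _ ?_
  exact Set.singleton_subset_iff.mpr ((Set.Finite.mem_toFinset _).mp u.2)

theorem tgenSum_mul_sgenSum_self (e : E) :
    tgenSum R G hfin e * sgenSum R G hfin e = vertexSum R G.toGraph (hfin e).toFinset := by
  rw [tgenSum, sgenSum, Finset.sum_mul_sum, vertexSum,
    ← Finset.sum_attach _ fun v => pgen R G.toGraph {v} (.vertex v)]
  refine Finset.sum_congr rfl fun u _ => ?_
  rw [Finset.sum_eq_single_of_mem u (Finset.mem_attach _ _) fun w _ hw =>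
    tgen_mul_sgen_of_ne fun h => hw (Subtype.ext (congrArg (·.1.2) h).symm), tgen_mul_sgen_self]
  rfl

theorem tgenSum_mul_sgenSum_of_ne {e f : E} (h : e ≠ f) :
    tgenSum R G hfin e * sgenSum R G hfin f = 0 := by
  rw [tgenSum, sgenSum, Finset.sum_mul_sum]
  exact Finset.sum_eq_zero fun u _ => Finset.sum_eq_zero fun w _ =>
    tgen_mul_sgen_of_ne fun hq => h (congrArg (·.1.1) hq)

theorem sgenSum_mul_tgenSum (e : E) :
    sgenSum R G hfin e * tgenSum R G hfin e = ∑ u ∈ (hfin e).toFinset.attach,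
      sgen R G.toGraph ⟨(e, u.1), (Set.Finite.mem_toFinset _).mp u.2⟩ *
        tgen R G.toGraph ⟨(e, u.1), (Set.Finite.mem_toFinset _).mp u.2⟩ := by
  rw [sgenSum, tgenSum, Finset.sum_mul_sum]
  refine Finset.sum_congr rfl fun u _ => Finset.sum_eq_single_of_mem u (Finset.mem_attach _ _) ?_
  exact fun w _ hw => sgen_mul_tgen_of_disjoint <|
    Set.disjoint_singleton.mpr fun h => hw (Subtype.ext h.symm)

theorem isLeavittFamily_toGraph : G.IsLeavittFamily (sgenSum R G hfin) (tgenSum R G hfin)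
    fun _ hA => vertexSum R G.toGraph (hA.finite hfin).toFinset where
  p_empty _ := by simp
  p_mul_p _ _ := vertexSum_toFinset_mul _ _
  p_union _ _ := vertexSum_toFinset_union _ _
  p_src_mul_s e := by simpa using pgen_src_mul_sgenSum hfin e
  s_mul_p_rng e := by
    rw [vertexSum_toFinset_eq_pgen (inG0_of_finite_nonempty (hfin e) (G.rng_nonempty e))]
    exact sgenSum_mul_pgen_rng hfin e _
  p_rng_mul_t e := by
    rw [vertexSum_toFinset_eq_pgen (inG0_of_finite_nonempty (hfin e) (G.rng_nonempty e))]
    exact pgen_rng_mul_tgenSum hfin e _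
  t_mul_p_src e := by simpa using tgenSum_mul_pgen_src hfin e
  t_mul_s_self e := tgenSum_mul_sgenSum_self hfin e
  t_mul_s_of_ne h := tgenSum_mul_sgenSum_of_ne hfin h
  p_vertex_eq_sum v hS hne := by
    have hQ := finite_toGraph_src hfin hS
    rw [vertexSum_toFinset_singleton, pgen_vertex_eq_sum v hQ (nonempty_toGraph_src hne),
      sum_toGraph_src hfin hS hQ]
    exact Finset.sum_congr rfl fun e _ => (sgenSum_mul_tgenSum hfin e).symm

end ToGraphFamily

section FromGraphFamily

variable {R : Type} [CommRing R] {G : Ultragraph V E}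

theorem sum_attach_pgen_vertex (hfin : ∀ e, (G.rng e).Finite) (e : E) :
    ∑ u ∈ (hfin e).toFinset.attach, pgen R G {u.1} (.vertex u.1) =
      pgen R G (G.rng e) (.range e) :=
  (Finset.sum_attach _ fun v => pgen R G {v} (.vertex v)).trans (vertexSum_toFinset_eq_pgen _ _)

theorem sum_sgen_mul_pgen_mul_tgen (hfin : ∀ e, (G.rng e).Finite) (e : E) :
    ∑ u ∈ (hfin e).toFinset.attach, sgen R G e * pgen R G {u.1} (.vertex _) *
      (pgen R G {u.1} (.vertex _) * tgen R G e) = sgen R G e * tgen R G e := by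
  simp_rw [mul_assoc, ← mul_assoc (pgen R G _ _), pgen_mul_pgen_of_subset _ _ le_rfl]
  rw [← Finset.mul_sum, ← Finset.sum_mul, sum_attach_pgen_vertex, pgen_rng_mul_tgen]

variable (R G) in
theorem isLeavittFamily_ofGraph (hfin : ∀ e, (G.rng e).Finite) : G.toGraph.IsLeavittFamily
    (fun q => sgen R G q.1.1 * pgen R G {q.1.2} (.vertex _))
    (fun q => pgen R G {q.1.2} (.vertex _) * tgen R G q.1.1)
    fun _ hA => vertexSum R G (hA.finite (toGraph_rng_finite G)).toFinset where
  p_empty _ := by simp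
  p_mul_p _ _ := vertexSum_toFinset_mul _ _
  p_union _ _ := vertexSum_toFinset_union _ _
  p_src_mul_s q := by
    simp only [vertexSum_toFinset_singleton]
    rw [← mul_assoc]
    exact congrArg (· * _) (pgen_src_mul_sgen q.1.1)
  s_mul_p_rng q := by
    simp [toGraph, mul_assoc, pgen_mul_pgen_of_subset]
  p_rng_mul_t q := by
    simp [toGraph, ← mul_assoc, pgen_mul_pgen_of_subset]
  t_mul_p_src q := by
    simp [toGraph, mul_assoc, tgen_mul_pgen_src]
  t_mul_s_self q := by
    simp only [toGraph, vertexSum_toFinset_singleton]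
    rw [mul_assoc, ← mul_assoc (tgen R G _), tgen_mul_sgen_self, ← mul_assoc,
      pgen_mul_pgen_of_subset _ _ (Set.singleton_subset_iff.mpr q.2),
      pgen_mul_pgen_of_subset _ _ le_rfl]
  t_mul_s_of_ne {q q'} h := by
    rw [mul_assoc, ← mul_assoc (tgen R G _)]
    by_cases he : q.1.1 = q'.1.1
    · have hu : q.1.2 ≠ q'.1.2 := fun hu => h (Subtype.ext (Prod.ext he hu))
      rw [he, tgen_mul_sgen_self, ← mul_assoc,
        pgen_mul_pgen_of_subset _ _ (Set.singleton_subset_iff.mpr (he ▸ q.2)),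
        pgen_mul_pgen_of_disjoint _ _ (Set.disjoint_singleton.mpr hu)]
    · rw [tgen_mul_sgen_of_ne he, zero_mul, mul_zero]
  p_vertex_eq_sum v hQ hne := by
    have hS := finite_src_of_toGraph hQ
    rw [vertexSum_toFinset_singleton, pgen_vertex_eq_sum v hS (nonempty_src_of_toGraph hne),
      sum_toGraph_src hfin hS hQ]
    exact Finset.sum_congr rfl fun e _ => (sum_sgen_mul_pgen_mul_tgen hfin e).symm

end FromGraphFamily

section Equiv

variable (R : Type) [CommRing R] (G : Ultragraph V E) (hfin : ∀ e, (G.rng e).Finite)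

noncomputable def toGraphHom : LPABig R G →ₐ[R] LPABig R G.toGraph :=
  (isLeavittFamily_toGraph hfin).lift R

noncomputable def ofGraphHom : LPABig R G.toGraph →ₐ[R] LPABig R G :=
  (isLeavittFamily_ofGraph R G hfin).lift R

variable {R G}

theorem map_vertexSum {E' : Type} {K : Ultragraph V E'} (f : LPABig R G →ₐ[R] LPABig R K)
    (hf : ∀ v, f (pgen R G {v} (.vertex v)) = pgen R K {v} (.vertex v)) (s : Finset V) :
    f (vertexSum R G s) = vertexSum R K s := by
  simp only [vertexSum, map_sum, hf]

@[simp]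
theorem toGraphHom_sgen (e : E) : toGraphHom R G hfin (sgen R G e) = sgenSum R G hfin e :=
  IsLeavittFamily.lift_sgen _ e

@[simp]
theorem toGraphHom_tgen (e : E) : toGraphHom R G hfin (tgen R G e) = tgenSum R G hfin e :=
  IsLeavittFamily.lift_tgen _ e

@[simp]
theorem toGraphHom_pgen {A : Set V} (hA : G.InG0 A) :
    toGraphHom R G hfin (pgen R G A hA) = vertexSum R G.toGraph (hA.finite hfin).toFinset :=
  IsLeavittFamily.lift_pgen _ hA

@[simp]
theorem ofGraphHom_sgen (q : {q : E × V // q.2 ∈ G.rng q.1}) :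
    ofGraphHom R G hfin (sgen R G.toGraph q) = sgen R G q.1.1 * pgen R G {q.1.2} (.vertex _) :=
  IsLeavittFamily.lift_sgen _ q

@[simp]
theorem ofGraphHom_tgen (q : {q : E × V // q.2 ∈ G.rng q.1}) :
    ofGraphHom R G hfin (tgen R G.toGraph q) = pgen R G {q.1.2} (.vertex _) * tgen R G q.1.1 :=
  IsLeavittFamily.lift_tgen _ q

@[simp]
theorem ofGraphHom_pgen {A : Set V} (hA : G.toGraph.InG0 A) :
    ofGraphHom R G hfin (pgen R G.toGraph A hA) =
      vertexSum R G (hA.finite (toGraph_rng_finite G)).toFinset :=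
  IsLeavittFamily.lift_pgen _ hA

theorem ofGraphHom_comp_toGraphHom :
    (ofGraphHom R G hfin).comp (toGraphHom R G hfin) = AlgHom.id R (LPABig R G) := by
  refine algHom_ext (fun e => ?_) (fun e => ?_) (fun A hA => ?_)
  · simp only [AlgHom.comp_apply, toGraphHom_sgen, sgenSum, map_sum, ofGraphHom_sgen]
    rw [← Finset.mul_sum, sum_attach_pgen_vertex, sgen_mul_pgen_rng, AlgHom.id_apply]
  · simp only [AlgHom.comp_apply, toGraphHom_tgen, tgenSum, map_sum, ofGraphHom_tgen]
    rw [← Finset.sum_mul, sum_attach_pgen_vertex, pgen_rng_mul_tgen, AlgHom.id_apply]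
  · rw [AlgHom.comp_apply, toGraphHom_pgen, map_vertexSum _ (fun v => by simp),
      vertexSum_toFinset_eq_pgen hA, AlgHom.id_apply]

theorem toGraphHom_comp_ofGraphHom :
    (toGraphHom R G hfin).comp (ofGraphHom R G hfin) = AlgHom.id R (LPABig R G.toGraph) := by
  refine algHom_ext (fun q => ?_) (fun q => ?_) (fun A hA => ?_)
  · simp only [AlgHom.comp_apply, ofGraphHom_sgen, map_mul, toGraphHom_sgen, toGraphHom_pgen,
      vertexSum_toFinset_singleton, sgenSum, Finset.sum_mul, AlgHom.id_apply]
    rw [Finset.sum_eq_single_of_mem ⟨q.1.2, (hfin _).mem_toFinset.mpr q.2⟩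
      (Finset.mem_attach _ _)]
    · exact sgen_mul_pgen_of_subset _ le_rfl
    · exact fun u _ hu => sgen_mul_pgen_of_disjoint _ <|
        Set.disjoint_singleton.mpr fun h => hu (Subtype.ext h)
  · simp only [AlgHom.comp_apply, ofGraphHom_tgen, map_mul, toGraphHom_tgen, toGraphHom_pgen,
      vertexSum_toFinset_singleton, tgenSum, Finset.mul_sum, AlgHom.id_apply]
    rw [Finset.sum_eq_single_of_mem ⟨q.1.2, (hfin _).mem_toFinset.mpr q.2⟩
      (Finset.mem_attach _ _)]
    · exact pgen_mul_tgen_of_subset _ le_rfl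
    · exact fun u _ hu => pgen_mul_tgen_of_disjoint _ <|
        Set.disjoint_singleton.mpr fun h => hu (Subtype.ext h.symm)
  · rw [AlgHom.comp_apply, ofGraphHom_pgen, map_vertexSum _ (fun v => by simp),
      vertexSum_toFinset_eq_pgen hA, AlgHom.id_apply]

theorem ofGraphHom_toGraphHom (x : LPABig R G) : ofGraphHom R G hfin (toGraphHom R G hfin x) = x :=
  AlgHom.congr_fun (ofGraphHom_comp_toGraphHom hfin) x

theorem toGraphHom_ofGraphHom (y : LPABig R G.toGraph) :
    toGraphHom R G hfin (ofGraphHom R G hfin y) = y :=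
  AlgHom.congr_fun (toGraphHom_comp_ofGraphHom hfin) y

end Equiv

section Grading

variable (R : Type) [CommRing R] (G : Ultragraph V E)

def zSpan (m : ℤ) : Submodule R (LPABig R G) :=
  Submodule.span R {x | ∃ (α β : List E) (A : Set V) (hA : G.InG0 A),
    G.IsPath α ∧ G.IsPath β ∧ (α.length : ℤ) - (β.length : ℤ) = m ∧
      x = mono R G α A hA β}

variable {R G}

theorem zComp_eq_zSpan (m : ℤ) : zComp R G m = (zSpan R G m).toAddSubgroup := by
  refine le_antisymm ((AddSubgroup.closure_le _).mpr ?_) fun x hx => ?_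
  · rintro _ ⟨l, α, β, A, hA, hα, hβ, hm, rfl⟩
    exact Submodule.smul_mem _ l (Submodule.subset_span ⟨α, β, A, hA, hα, hβ, hm, rfl⟩)
  · rw [Submodule.mem_toAddSubgroup, ← Submodule.mem_toAddSubmonoid, zSpan,
      Submodule.span_eq_closure] at hx
    refine AddSubmonoid.closure_le.mpr ?_ hx
    rintro _ ⟨l, -, _, ⟨α, β, A, hA, hα, hβ, hm, rfl⟩, rfl⟩
    exact AddSubgroup.subset_closure ⟨l, α, β, A, hA, hα, hβ, hm, rfl⟩

theorem mono_mem_zSpan {α β : List E} {A : Set V} (hA : G.InG0 A) (hα : G.IsPath α)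
    (hβ : G.IsPath β) {m : ℤ} (hm : (α.length : ℤ) - β.length = m) :
    mono R G α A hA β ∈ zSpan R G m :=
  Submodule.subset_span ⟨α, β, A, hA, hα, hβ, hm, rfl⟩

theorem map_mem_of_mem_zSpan {M : Type*} [AddCommGroup M] [Module R M] (f : LPABig R G →ₗ[R] M)
    {N : Submodule R M} {m : ℤ}
    (h : ∀ (α β : List E) (A : Set V) (hA : G.InG0 A), G.IsPath α → G.IsPath β →
      (α.length : ℤ) - β.length = m → f (mono R G α A hA β) ∈ N)
    {x : LPABig R G} (hx : x ∈ zSpan R G m) : f x ∈ N :=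
  (Submodule.span_le (p := N.comap f)).mpr (by
    rintro _ ⟨α, β, A, hA, hα, hβ, hm, rfl⟩
    exact h α β A hA hα hβ hm) hx

theorem sPath_cons (e : E) (α : List E) : sPath R G (e :: α) = sgen R G e * sPath R G α := by
  simp [sPath]

theorem tPath_cons (e : E) (β : List E) : tPath R G (e :: β) = tPath R G β * tgen R G e := by
  simp [tPath]

theorem mono_cons_left (e : E) (α : List E) {A : Set V} (hA : G.InG0 A) (β : List E) :
    mono R G (e :: α) A hA β = sgen R G e * mono R G α A hA β := by
  simp only [mono, sPath_cons, mul_assoc]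

theorem mono_cons_right (α : List E) {A : Set V} (hA : G.InG0 A) (e : E) (β : List E) :
    mono R G α A hA (e :: β) = mono R G α A hA β * tgen R G e := by
  simp only [mono, tPath_cons, mul_assoc]

theorem mono_nil_left {A : Set V} (hA : G.InG0 A) (β : List E) :
    mono R G [] A hA β = pgen R G A hA * tPath R G β := by
  simp [mono, sPath]

theorem mono_nil_right (α : List E) {A : Set V} (hA : G.InG0 A) :
    mono R G α A hA [] = sPath R G α * pgen R G A hA := by
  simp [mono, tPath]

theorem pgen_mem_zSpan {A : Set V} (hA : G.InG0 A) : pgen R G A hA ∈ zSpan R G 0 := by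
  simpa [mono_nil_left, tPath] using mono_mem_zSpan (R := R) hA .nil .nil (m := 0) (by simp)

theorem vertexSum_mem_zSpan (s : Finset V) : vertexSum R G s ∈ zSpan R G 0 :=
  sum_mem fun _ _ => pgen_mem_zSpan _

theorem sgen_mul_mem_zSpan (e : E) {m : ℤ} {y : LPABig R G} (hy : y ∈ zSpan R G m) :
    sgen R G e * y ∈ zSpan R G (m + 1) := by
  refine map_mem_of_mem_zSpan (LinearMap.mulLeft R (sgen R G e))
    (fun α β A hA hα hβ hm => ?_) hy
  simp only [LinearMap.mulLeft_apply]
  cases α with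
  | nil =>
    rw [mono_nil_left, ← mul_assoc, sgen_mul_pgen, mul_assoc, ← mono_nil_left,
      ← mono_cons_left]
    exact mono_mem_zSpan _ (List.isChain_singleton e) hβ (by simp at hm ⊢; omega)
  | cons f α =>
    by_cases h : G.src f ∈ G.rng e
    · rw [← mono_cons_left]
      exact mono_mem_zSpan _ (List.isChain_cons_cons.mpr ⟨h, hα⟩) hβ
        (by simp at hm ⊢; omega)
    · rw [mono_cons_left, ← mul_assoc, sgen_mul_sgen_of_notMem h, zero_mul]
      exact zero_mem _

theorem mul_tgen_mem_zSpan (e : E) {m : ℤ} {y : LPABig R G} (hy : y ∈ zSpan R G m) :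
    y * tgen R G e ∈ zSpan R G (m - 1) := by
  refine map_mem_of_mem_zSpan (LinearMap.mulRight R (tgen R G e))
    (fun α β A hA hα hβ hm => ?_) hy
  simp only [LinearMap.mulRight_apply]
  cases β with
  | nil =>
    rw [mono_nil_right, mul_assoc, pgen_mul_tgen, ← mul_assoc, ← mono_nil_right,
      ← mono_cons_right]
    exact mono_mem_zSpan _ hα (List.isChain_singleton e) (by simp at hm ⊢; omega)
  | cons f β =>
    by_cases h : G.src f ∈ G.rng e
    · rw [← mono_cons_right]
      exact mono_mem_zSpan _ hα (List.isChain_cons_cons.mpr ⟨h, hβ⟩)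
        (by simp at hm ⊢; omega)
    · rw [mono_cons_right, mul_assoc, tgen_mul_tgen_of_notMem h, mul_zero]
      exact zero_mem _

theorem pgen_mul_mem_zSpan {B : Set V} (hB : G.InG0 B) {m : ℤ} {y : LPABig R G}
    (hy : y ∈ zSpan R G m) : pgen R G B hB * y ∈ zSpan R G m := by
  refine map_mem_of_mem_zSpan (LinearMap.mulLeft R (pgen R G B hB))
    (fun α β A hA hα hβ hm => ?_) hy
  simp only [LinearMap.mulLeft_apply]
  cases α with
  | nil =>
    rw [mono_nil_left, ← mul_assoc, pgen_mul_pgen, ← mono_nil_left]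
    exact mono_mem_zSpan _ hα hβ hm
  | cons f α =>
    rw [mono_cons_left, ← mul_assoc]
    by_cases h : G.src f ∈ B
    · rw [pgen_mul_sgen_of_mem hB h, ← mono_cons_left]
      exact mono_mem_zSpan _ hα hβ hm
    · rw [pgen_mul_sgen_of_notMem hB h, zero_mul]
      exact zero_mem _

theorem mul_pgen_mem_zSpan {B : Set V} (hB : G.InG0 B) {m : ℤ} {y : LPABig R G}
    (hy : y ∈ zSpan R G m) : y * pgen R G B hB ∈ zSpan R G m := by
  refine map_mem_of_mem_zSpan (LinearMap.mulRight R (pgen R G B hB))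
    (fun α β A hA hα hβ hm => ?_) hy
  simp only [LinearMap.mulRight_apply]
  cases β with
  | nil =>
    rw [mono_nil_right, mul_assoc, pgen_mul_pgen, ← mono_nil_right]
    exact mono_mem_zSpan _ hα hβ hm
  | cons f β =>
    rw [mono_cons_right, mul_assoc]
    by_cases h : G.src f ∈ B
    · rw [tgen_mul_pgen_of_mem hB h, ← mono_cons_right]
      exact mono_mem_zSpan _ hα hβ hm
    · rw [tgen_mul_pgen_of_notMem hB h, mul_zero]
      exact zero_mem _

end Grading

section GradedHom

variable {R : Type} [CommRing R] {G : Ultragraph V E} {E' : Type} {K : Ultragraph V E'}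
  (f : LPABig R G →ₐ[R] LPABig R K)

theorem map_sPath_mul_mem_zSpan
    (hs : ∀ e m y, y ∈ zSpan R K m → f (sgen R G e) * y ∈ zSpan R K (m + 1)) (α : List E)
    {m : ℤ} {y : LPABig R K} (hy : y ∈ zSpan R K m) :
    f (sPath R G α) * y ∈ zSpan R K (m + α.length) := by
  induction α with
  | nil => simpa [sPath] using hy
  | cons e α ih =>
    rw [sPath_cons, map_mul, mul_assoc, List.length_cons, Nat.cast_succ, ← add_assoc]
    exact hs e _ _ ih

theorem mul_map_tPath_mem_zSpan
    (ht : ∀ e m y, y ∈ zSpan R K m → y * f (tgen R G e) ∈ zSpan R K (m - 1)) (β : List E)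
    {m : ℤ} {y : LPABig R K} (hy : y ∈ zSpan R K m) :
    y * f (tPath R G β) ∈ zSpan R K (m - β.length) := by
  induction β with
  | nil => simpa [tPath] using hy
  | cons e β ih =>
    rw [tPath_cons, map_mul, ← mul_assoc, List.length_cons, Nat.cast_succ, ← sub_sub]
    exact ht e _ _ ih

theorem map_mem_zSpan
    (hs : ∀ e m y, y ∈ zSpan R K m → f (sgen R G e) * y ∈ zSpan R K (m + 1))
    (ht : ∀ e m y, y ∈ zSpan R K m → y * f (tgen R G e) ∈ zSpan R K (m - 1))
    (hp : ∀ A hA, f (pgen R G A hA) ∈ zSpan R K 0) {m : ℤ} {x : LPABig R G}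
    (hx : x ∈ zSpan R G m) : f x ∈ zSpan R K m := by
  refine map_mem_of_mem_zSpan f.toLinearMap (fun α β A hA _ _ hm => ?_) hx
  have := map_sPath_mul_mem_zSpan f hs α (mul_map_tPath_mem_zSpan f ht β (hp A hA))
  rwa [zero_sub, neg_add_eq_sub, hm, ← mul_assoc, ← map_mul, ← map_mul] at this

end GradedHom

section GradedEquiv

variable {R : Type} [CommRing R] {G : Ultragraph V E} (hfin : ∀ e, (G.rng e).Finite)

theorem toGraphHom_mem_zSpan {m : ℤ} {x : LPABig R G} (hx : x ∈ zSpan R G m) :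
    toGraphHom R G hfin x ∈ zSpan R G.toGraph m := by
  refine map_mem_zSpan _ (fun e m y hy => ?_) (fun e m y hy => ?_) (fun A hA => ?_) hx
  · rw [toGraphHom_sgen, sgenSum, Finset.sum_mul]
    exact sum_mem fun _ _ => sgen_mul_mem_zSpan _ hy
  · rw [toGraphHom_tgen, tgenSum, Finset.mul_sum]
    exact sum_mem fun _ _ => mul_tgen_mem_zSpan _ hy
  · rw [toGraphHom_pgen]
    exact vertexSum_mem_zSpan _

theorem ofGraphHom_mem_zSpan {m : ℤ} {y : LPABig R G.toGraph} (hy : y ∈ zSpan R G.toGraph m) :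
    ofGraphHom R G hfin y ∈ zSpan R G m := by
  refine map_mem_zSpan _ (fun q m y hy => ?_) (fun q m y hy => ?_) (fun A hA => ?_) hy
  · rw [ofGraphHom_sgen, mul_assoc]
    exact sgen_mul_mem_zSpan _ (pgen_mul_mem_zSpan _ hy)
  · rw [ofGraphHom_tgen, ← mul_assoc]
    exact mul_tgen_mem_zSpan _ (mul_pgen_mem_zSpan _ hy)
  · rw [ofGraphHom_pgen]
    exact vertexSum_mem_zSpan _

end GradedEquiv

section Restriction

variable {R : Type} [CommRing R] {G : Ultragraph V E}

theorem sgen_mem_LPA (e : E) : sgen R G e ∈ LPA R G := (sEl R G e).2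

theorem tgen_mem_LPA (e : E) : tgen R G e ∈ LPA R G := (tEl R G e).2

theorem pgen_mem_LPA {A : Set V} (hA : G.InG0 A) : pgen R G A hA ∈ LPA R G := (pEl R G A hA).2

theorem vertexSum_mem_LPA (s : Finset V) : vertexSum R G s ∈ LPA R G :=
  sum_mem fun _ _ => pgen_mem_LPA _

variable (hfin : ∀ e, (G.rng e).Finite)

theorem toGraphHom_mem_LPA {x : LPABig R G} (hx : x ∈ LPA R G) :
    toGraphHom R G hfin x ∈ LPA R G.toGraph := by
  refine map_mem_LPA _ (fun e => ?_) (fun e => ?_) (fun A hA => ?_) hx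
  · rw [toGraphHom_sgen]
    exact sum_mem fun _ _ => sgen_mem_LPA _
  · rw [toGraphHom_tgen]
    exact sum_mem fun _ _ => tgen_mem_LPA _
  · rw [toGraphHom_pgen]
    exact vertexSum_mem_LPA _

theorem ofGraphHom_mem_LPA {y : LPABig R G.toGraph} (hy : y ∈ LPA R G.toGraph) :
    ofGraphHom R G hfin y ∈ LPA R G := by
  refine map_mem_LPA _ (fun q => ?_) (fun q => ?_) (fun A hA => ?_) hy
  · rw [ofGraphHom_sgen]
    exact mul_mem (sgen_mem_LPA _) (pgen_mem_LPA _)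
  · rw [ofGraphHom_tgen]
    exact mul_mem (pgen_mem_LPA _) (tgen_mem_LPA _)
  · rw [ofGraphHom_pgen]
    exact vertexSum_mem_LPA _

variable (R G) in
noncomputable def toGraphLPA : LPA R G →ₙₐ[R] LPA R G.toGraph :=
  NonUnitalAlgHom.codRestrict
    ((toGraphHom R G hfin : LPABig R G →ₙₐ[R] LPABig R G.toGraph).comp
      (NonUnitalSubalgebraClass.subtype (LPA R G)))
    _ fun x => toGraphHom_mem_LPA hfin x.2

@[simp]
theorem coe_toGraphLPA (x : LPA R G) :
    (toGraphLPA R G hfin x : LPABig R G.toGraph) = toGraphHom R G hfin x :=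
  rfl

theorem bijective_toGraphLPA : Function.Bijective (toGraphLPA R G hfin) := by
  refine ⟨fun x y h => Subtype.ext ?_, fun y => ⟨⟨_, ofGraphHom_mem_LPA hfin y.2⟩, ?_⟩⟩
  · simpa [ofGraphHom_toGraphHom] using congrArg (ofGraphHom R G hfin ·.1) h
  · exact Subtype.ext (toGraphHom_ofGraphHom hfin y.1)

end Restriction

end Ultragraph

set_option synthInstance.maxHeartbeats 1000000 in
set_option maxHeartbeats 1000000 in
open Ultragraph in
theorem graded_iso_toGraph_general {V E : Type}
    (G : Ultragraph V E) (hfin : ∀ e : E, (G.rng e).Finite)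
    (R : Type) [CommRing R] :
    ∃ π : LPA R G →ₙₐ[R] LPA R G.toGraph,
      Function.Bijective π ∧
      (∀ (A : Set V) (hA : G.InG0 A) (hAf : A.Finite),
        π (pEl R G A hA) =
          ∑ v ∈ hAf.toFinset, pEl R G.toGraph {v} (InG0.vertex v)) ∧
      (∀ e : E, π (sEl R G e) =
        ∑ u ∈ (hfin e).toFinset.attach,
          sEl R G.toGraph ⟨(e, u.1), (Set.Finite.mem_toFinset _).mp u.2⟩) ∧
      (∀ e : E, π (tEl R G e) =
        ∑ u ∈ (hfin e).toFinset.attach,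
          tEl R G.toGraph ⟨(e, u.1), (Set.Finite.mem_toFinset _).mp u.2⟩) ∧
      (∀ (m : ℤ) (x : LPA R G), (x : LPABig R G) ∈ zComp R G m →
        (π x : LPABig R G.toGraph) ∈ zComp R G.toGraph m) ∧
      (∀ (m : ℤ) (y : LPA R G.toGraph), (y : LPABig R G.toGraph) ∈ zComp R G.toGraph m →
        ∃ x : LPA R G, (x : LPABig R G) ∈ zComp R G m ∧ π x = y) := by
  refine ⟨toGraphLPA R G hfin, bijective_toGraphLPA hfin, fun A hA hAf => ?_, fun e => ?_,
    fun e => ?_, fun m x hx => ?_, fun m y hy => ?_⟩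
  · ext; simp [pEl, vertexSum]
  · ext; simp [sEl, sgenSum]
  · ext; simp [tEl, tgenSum]
  · rw [zComp_eq_zSpan] at hx ⊢
    exact toGraphHom_mem_zSpan hfin hx
  · obtain ⟨x, rfl⟩ := (bijective_toGraphLPA hfin).2 y
    refine ⟨x, ?_, rfl⟩
    rw [zComp_eq_zSpan] at hy ⊢
    simpa [ofGraphHom_toGraphHom] using ofGraphHom_mem_zSpan hfin hy

set_option synthInstance.maxHeartbeats 1000000 in
set_option maxHeartbeats 1000000 in
open Ultragraph in
/-- for a finite-range ultragraph there is a graded `R`-algebra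
isomorphism `L_R(𝒢) ≅ L_R(E_𝒢)` sending `p_A ↦ Σ_{v∈A} p_v`, `s_e ↦ Σ_{u∈r(e)} s_{e_u}`
and `s_e^* ↦ Σ_{u∈r(e)} s_{e_u}^*`. -/
theorem graded_iso_toGraph {V E : Type} [Countable V] [Countable E]
    (G : Ultragraph V E) (hfin : ∀ e : E, (G.rng e).Finite)
    (R : Type) [CommRing R] :
    ∃ π : LPA R G →ₙₐ[R] LPA R G.toGraph,
      Function.Bijective π ∧
      (∀ (A : Set V) (hA : G.InG0 A) (hAf : A.Finite),
        π (pEl R G A hA) =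
          ∑ v ∈ hAf.toFinset, pEl R G.toGraph {v} (InG0.vertex v)) ∧
      (∀ e : E, π (sEl R G e) =
        ∑ u ∈ (hfin e).toFinset.attach,
          sEl R G.toGraph ⟨(e, u.1), (Set.Finite.mem_toFinset _).mp u.2⟩) ∧
      (∀ e : E, π (tEl R G e) =
        ∑ u ∈ (hfin e).toFinset.attach,
          tEl R G.toGraph ⟨(e, u.1), (Set.Finite.mem_toFinset _).mp u.2⟩) ∧
      (∀ (m : ℤ) (x : LPA R G), (x : LPABig R G) ∈ zComp R G m →
        (π x : LPABig R G.toGraph) ∈ zComp R G.toGraph m) ∧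
      (∀ (m : ℤ) (y : LPA R G.toGraph), (y : LPABig R G.toGraph) ∈ zComp R G.toGraph m →
        ∃ x : LPA R G, (x : LPABig R G) ∈ zComp R G m ∧ π x = y) :=
  graded_iso_toGraph_general G hfin R
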